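/- arXiv:1905.10768 — 7 statements merged into one kernel-verified Lean document; each statement's English description precedes it below -/
import Mathlib

section
/- The Rényi divergence is nondecreasing in its order: for discrete probability vectors p, q with q_i > 0 for all i, and 0 < α ≤ β with α, β ≠ 1, one has D_α(p‖q) ≤ D_β(p‖q). -/
/-!
By Hölder's inequality, `t ↦ log ∑ i, p i ^ t * q i ^ (1 - t)` is convex on `(0, ∞)`, and it
vanishes at `t = 1` because `∑ i, p i = 1`. The Rényi divergence of order `t` is the slope of the
secant of this convex function between `1` and `t`, so it is nondecreasing in `t`.
-/

open Real Finset

theorem Real.sum_rpow_mul_rpow_le_of_nonneg {ι : Type*} (s : Finset ι) {f g : ι → ℝ}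
    (hf : ∀ i ∈ s, 0 ≤ f i) (hg : ∀ i ∈ s, 0 ≤ g i) {a b : ℝ} (ha : 0 < a) (hb : 0 < b)
    (hab : a + b = 1) :
    ∑ i ∈ s, f i ^ a * g i ^ b ≤ (∑ i ∈ s, f i) ^ a * (∑ i ∈ s, g i) ^ b := by
  have hpow : ∀ {c : ℝ} {h : ι → ℝ}, 0 < c → (∀ i ∈ s, 0 ≤ h i) →
      ∑ i ∈ s, (h i ^ c) ^ c⁻¹ = ∑ i ∈ s, h i := fun hc hh =>
    sum_congr rfl fun i hi => Real.rpow_rpow_inv (hh i hi) hc.ne'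
  simpa [hpow ha hf, hpow hb hg] using
    Real.inner_le_Lp_mul_Lq_of_nonneg s (.inv_inv ha hb hab)
      (fun i hi => rpow_nonneg (hf i hi) a) (fun i hi => rpow_nonneg (hg i hi) b)

section RenyiSum

variable {ι : Type*} [Fintype ι] {p q : ι → ℝ}

theorem sum_rpow_mul_rpow_one_sub_pos (hp0 : ∀ i, 0 ≤ p i) (hq0 : ∀ i, 0 < q i)
    (hp : ∃ i, 0 < p i) (t : ℝ) : 0 < ∑ i, p i ^ t * q i ^ (1 - t) := by
  obtain ⟨i₀, hi₀⟩ := hp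
  exact sum_pos' (fun i _ => mul_nonneg (rpow_nonneg (hp0 i) t) (rpow_nonneg (hq0 i).le _))
    ⟨i₀, mem_univ _, mul_pos (rpow_pos_of_pos hi₀ t) (rpow_pos_of_pos (hq0 i₀) _)⟩

theorem rpow_mul_rpow_one_sub_interpolate {x y : ℝ} (hx : 0 < x) (hy : 0 < y) {a b : ℝ}
    (ha : 0 ≤ a) (hb : 0 ≤ b) (hab : a + b = 1) {r s : ℝ} (hr : 0 ≤ r) (hs : 0 < s) :
    (r ^ x * s ^ (1 - x)) ^ a * (r ^ y * s ^ (1 - y)) ^ b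
      = r ^ (a * x + b * y) * s ^ (1 - (a * x + b * y)) := by
  have hxy : 0 < x * a + y * b := by
    simpa [mul_comm] using convex_Ioi (0 : ℝ) hx hy ha hb hab
  rw [mul_rpow (rpow_nonneg hr _) (rpow_nonneg hs.le _),
    mul_rpow (rpow_nonneg hr _) (rpow_nonneg hs.le _), ← rpow_mul hr, ← rpow_mul hr,
    ← rpow_mul hs.le, ← rpow_mul hs.le, mul_mul_mul_comm, ← rpow_add' hr hxy.ne', ← rpow_add hs]
  congr 2
  · ring
  · linear_combination hab

theorem convexOn_log_sum_rpow_mul_rpow_one_sub (hp0 : ∀ i, 0 ≤ p i) (hq0 : ∀ i, 0 < q i)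
    (hp : ∃ i, 0 < p i) :
    ConvexOn ℝ (Set.Ioi (0 : ℝ)) fun t => log (∑ i, p i ^ t * q i ^ (1 - t)) := by
  have hpos := sum_rpow_mul_rpow_one_sub_pos hp0 hq0 hp
  refine convexOn_iff_forall_pos.mpr ⟨convex_Ioi 0, fun x hx y hy a b ha hb hab => ?_⟩
  have hholder := Real.sum_rpow_mul_rpow_le_of_nonneg univ
    (fun i _ => mul_nonneg (rpow_nonneg (hp0 i) x) (rpow_nonneg (hq0 i).le (1 - x)))
    (fun i _ => mul_nonneg (rpow_nonneg (hp0 i) y) (rpow_nonneg (hq0 i).le (1 - y))) ha hb hab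
  simp only [rpow_mul_rpow_one_sub_interpolate hx hy ha.le hb.le hab (hp0 _) (hq0 _)] at hholder
  calc log (∑ i, p i ^ (a • x + b • y) * q i ^ (1 - (a • x + b • y)))
      ≤ log ((∑ i, p i ^ x * q i ^ (1 - x)) ^ a * (∑ i, p i ^ y * q i ^ (1 - y)) ^ b) :=
        log_le_log (hpos _) hholder
    _ = a • log (∑ i, p i ^ x * q i ^ (1 - x)) + b • log (∑ i, p i ^ y * q i ^ (1 - y)) := by
        rw [log_mul (rpow_pos_of_pos (hpos x) a).ne' (rpow_pos_of_pos (hpos y) b).ne',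
          log_rpow (hpos x), log_rpow (hpos y), smul_eq_mul, smul_eq_mul]

end RenyiSum

theorem renyi_mono_order_general (n : ℕ) (p q : Fin n → ℝ)
    (hp0 : ∀ i, 0 ≤ p i) (hp1 : ∑ i, p i = 1)
    (hq0 : ∀ i, 0 < q i)
    (α β : ℝ) (hα : 0 < α) (hαβ : α ≤ β) (hα1 : α ≠ 1) (hβ1 : β ≠ 1) :
    (α - 1)⁻¹ * Real.log (∑ i, p i ^ α * q i ^ (1 - α)) ≤
      (β - 1)⁻¹ * Real.log (∑ i, p i ^ β * q i ^ (1 - β)) := by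
  obtain ⟨i₀, -, hi₀⟩ := exists_lt_of_sum_lt (s := univ) (f := 0) (g := p) (by simp [hp1])
  have hconvex := convexOn_log_sum_rpow_mul_rpow_one_sub hp0 hq0 ⟨i₀, hi₀⟩
  have hsecant :=
    hconvex.secant_mono (a := 1) (Set.mem_Ioi.2 one_pos) hα (hα.trans_le hαβ) hα1 hβ1 hαβ
  simpa [hp1, div_eq_inv_mul] using hsecant

/-- The Rényi divergence is nondecreasing in its order: for probability
vectors `p`, `q` with `q` strictly positive and `0 < α ≤ β`, `α, β ≠ 1`,
`D_α(p‖q) ≤ D_β(p‖q)`. -/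
theorem renyi_mono_order (n : ℕ) (p q : Fin n → ℝ)
    (hp0 : ∀ i, 0 ≤ p i) (hp1 : ∑ i, p i = 1)
    (hq0 : ∀ i, 0 < q i) (hq1 : ∑ i, q i = 1)
    (α β : ℝ) (hα : 0 < α) (hαβ : α ≤ β) (hα1 : α ≠ 1) (hβ1 : β ≠ 1) :
    (α - 1)⁻¹ * Real.log (∑ i, p i ^ α * q i ^ (1 - α)) ≤
      (β - 1)⁻¹ * Real.log (∑ i, p i ^ β * q i ^ (1 - β)) :=
  renyi_mono_order_general n p q hp0 hp1 hq0 α β hα hαβ hα1 hβ1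
end

section
/- With p, q strictly positive probability vectors, γ(λ)_i = min{p_i, q_i/λ}/β(λ), β(λ) = Σ_j min{p_j, q_j/λ}, and λ ∈ [min_i q_i/p_i, max_i q_i/p_i]: D_∞(γ(λ)‖q) = −log(λ·β(λ)). -/
open Real

/-- STATEMENT 7: With `γ(λ) i = min (p i) (q i / λ) / β(λ)` and
`λ ∈ [min_i q i / p i, max_i q i / p i]`, we have `D_∞(γ(λ)‖q) = -log (λ·β(λ))`. -/
theorem dInfty_gamma_q (n : ℕ) (hn : 0 < n) (p q : Fin n → ℝ)
    (hp0 : ∀ i, 0 < p i) (hp1 : ∑ i, p i = 1)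
    (hq0 : ∀ i, 0 < q i) (hq1 : ∑ i, q i = 1)
    (l : ℝ)
    (hl₁ : (Finset.univ.inf' (Finset.univ_nonempty_iff.mpr ⟨⟨0, hn⟩⟩)
      fun i => q i / p i) ≤ l)
    (hl₂ : l ≤ Finset.univ.sup' (Finset.univ_nonempty_iff.mpr ⟨⟨0, hn⟩⟩)
      fun i => q i / p i) :
    Real.log (Finset.univ.sup' (Finset.univ_nonempty_iff.mpr ⟨⟨0, hn⟩⟩)
        fun i => (min (p i) (q i / l) / (∑ j, min (p j) (q j / l))) / q i) =
      -Real.log (l * ∑ j, min (p j) (q j / l)) := by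
  have hne : (Finset.univ : Finset (Fin n)).Nonempty :=
    Finset.univ_nonempty_iff.mpr ⟨⟨0, hn⟩⟩
  obtain ⟨i₀, -, hi₀⟩ := Finset.exists_mem_eq_inf' hne fun i => q i / p i
  rw [hi₀] at hl₁
  have hl0 : 0 < l := lt_of_lt_of_le (div_pos (hq0 i₀) (hp0 i₀)) hl₁
  set β : ℝ := ∑ j, min (p j) (q j / l) with hβdef
  have hβ : 0 < β :=
    Finset.sum_pos (fun j _ => lt_min (hp0 j) (div_pos (hq0 j) hl0)) hne
  have hmin : min (p i₀) (q i₀ / l) = q i₀ / l := by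
    apply min_eq_right
    rw [div_le_iff₀ hl0]
    nlinarith [(div_le_iff₀ (hp0 i₀)).mp hl₁]
  have hsup : (Finset.univ.sup' hne
      fun i => (min (p i) (q i / l) / β) / q i) = 1 / (l * β) := by
    apply le_antisymm
    · apply Finset.sup'_le
      intro i _
      have hqi : 0 < q i := hq0 i
      have h1 : min (p i) (q i / l) ≤ q i / l := min_le_right _ _
      have h2 : (min (p i) (q i / l) / β) / q i ≤ ((q i / l) / β) / q i := by
        gcongr
      calc (min (p i) (q i / l) / β) / q i ≤ ((q i / l) / β) / q i := h2
        _ = 1 / (l * β) := by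
          field_simp
    · have : (1 : ℝ) / (l * β) = (min (p i₀) (q i₀ / l) / β) / q i₀ := by
        rw [hmin]
        have hqi : 0 < q i₀ := hq0 i₀
        field_simp
      rw [this]
      exact Finset.le_sup' (fun i => (min (p i) (q i / l) / β) / q i)
        (Finset.mem_univ i₀)
  rw [hsup, one_div, Real.log_inv]
end

section
/- The curve γ(λ)_i = min{p_i, q_i/λ}/β(λ) is geodesic for the weak metric D_∞: for p, q strictly positive probability vectors and any λ ∈ [min_i q_i/p_i, max_i q_i/p_i], D_∞(p‖q) = D_∞(p‖γ(λ)) + D_∞(γ(λ)‖q). -/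
open Real

/-- The curve `γ(λ) i = min (p i) (q i / λ) / β(λ)` is geodesic for `D_∞`:
for `λ ∈ [min_i q i / p i, max_i q i / p i]`,
`D_∞(p‖q) = D_∞(p‖γ(λ)) + D_∞(γ(λ)‖q)`. -/
theorem gamma_geodesic (n : ℕ) (hn : 0 < n) (p q : Fin n → ℝ)
    (hp0 : ∀ i, 0 < p i) (hp1 : ∑ i, p i = 1)
    (hq0 : ∀ i, 0 < q i) (hq1 : ∑ i, q i = 1)
    (l : ℝ)
    (hl₁ : (Finset.univ.inf' (Finset.univ_nonempty_iff.mpr ⟨⟨0, hn⟩⟩)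
      fun i => q i / p i) ≤ l)
    (hl₂ : l ≤ Finset.univ.sup' (Finset.univ_nonempty_iff.mpr ⟨⟨0, hn⟩⟩)
      fun i => q i / p i) :
    letI hne : (Finset.univ : Finset (Fin n)).Nonempty :=
      Finset.univ_nonempty_iff.mpr ⟨⟨0, hn⟩⟩
    letI γ : Fin n → ℝ := fun i => min (p i) (q i / l) / (∑ j, min (p j) (q j / l))
    Real.log (Finset.univ.sup' hne fun i => p i / q i) =
      Real.log (Finset.univ.sup' hne fun i => p i / γ i) +
      Real.log (Finset.univ.sup' hne fun i => γ i / q i) := by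
  have hne : (Finset.univ : Finset (Fin n)).Nonempty :=
    Finset.univ_nonempty_iff.mpr ⟨⟨0, hn⟩⟩
  beta_reduce
  have hl0 : 0 < l := by
    refine lt_of_lt_of_le ?_ hl₁
    rw [Finset.lt_inf'_iff]
    exact fun i _ => div_pos (hq0 i) (hp0 i)
  set β := ∑ j, min (p j) (q j / l) with hβdef
  have hmin : ∀ i, 0 < min (p i) (q i / l) :=
    fun i => lt_min (hp0 i) (div_pos (hq0 i) hl0)
  have hβ : 0 < β := Finset.sum_pos (fun i _ => hmin i) hne
  set M := Finset.univ.sup' hne (fun i => p i / q i) with hMdef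
  obtain ⟨i0, -, hi0⟩ := Finset.exists_mem_eq_inf' hne (fun i => q i / p i)
  have hi0l : q i0 / p i0 ≤ l := by rw [← hi0]; exact hl₁
  have hqlp : q i0 ≤ l * p i0 := (div_le_iff₀ (hp0 i0)).mp hi0l
  have hMge : 1 / l ≤ M := by
    have h1 : 1 / l ≤ p i0 / q i0 := by
      rw [div_le_div_iff₀ hl0 (hq0 i0)]
      nlinarith
    exact h1.trans (Finset.le_sup' (fun i => p i / q i) (Finset.mem_univ i0))
  have hM0 : 0 < M := lt_of_lt_of_le (by positivity) hMge
  have hlM : 1 ≤ l * M := by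
    rw [div_le_iff₀ hl0] at hMge
    linarith [mul_comm M l]
  -- pointwise formula for p i / γ i
  have hpg : ∀ i, p i / (min (p i) (q i / l) / β) = β * max 1 (l * (p i / q i)) := by
    intro i
    rcases le_total (p i) (q i / l) with h | h
    · rw [min_eq_left h, max_eq_left]
      · field_simp [(hp0 i).ne']
      · rw [mul_div_assoc', mul_comm, div_le_one (hq0 i)]
        exact (le_div_iff₀ hl0).mp h
    · rw [min_eq_right h, max_eq_right]
      · have hq : q i ≠ 0 := (hq0 i).ne'
        field_simp
      · rw [mul_div_assoc', mul_comm, le_div_iff₀ (hq0 i), one_mul]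
        exact (div_le_iff₀ hl0).mp h
  have hA : Finset.univ.sup' hne (fun i => p i / (min (p i) (q i / l) / β)) = β * (l * M) := by
    apply le_antisymm
    · apply Finset.sup'_le
      intro i _
      rw [hpg i]
      apply mul_le_mul_of_nonneg_left _ hβ.le
      apply max_le hlM
      exact mul_le_mul_of_nonneg_left
        (Finset.le_sup' (fun i => p i / q i) (Finset.mem_univ i)) hl0.le
    · obtain ⟨i1, -, hi1⟩ := Finset.exists_mem_eq_sup' hne (fun i => p i / q i)
      have h2 : β * (l * M) = p i1 / (min (p i1) (q i1 / l) / β) := by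
        rw [hpg i1, ← hi1, ← hMdef, max_eq_right hlM]
      rw [h2]
      exact Finset.le_sup' (fun i => p i / (min (p i) (q i / l) / β)) (Finset.mem_univ i1)
  have hB : Finset.univ.sup' hne (fun i => min (p i) (q i / l) / β / q i) = 1 / (l * β) := by
    apply le_antisymm
    · apply Finset.sup'_le
      intro i _
      have hm : min (p i) (q i / l) ≤ q i / l := min_le_right _ _
      rw [div_div, div_le_div_iff₀ (mul_pos hβ (hq0 i)) (mul_pos hl0 hβ)]
      have : min (p i) (q i / l) * l ≤ q i := (le_div_iff₀ hl0).mp hm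
      nlinarith [hβ.le, (hmin i).le, (hq0 i).le]
    · have heq : min (p i0) (q i0 / l) / β / q i0 = 1 / (l * β) := by
        rw [min_eq_right (by rw [div_le_iff₀ hl0]; linarith [mul_comm l (p i0)])]
        have hq : q i0 ≠ 0 := (hq0 i0).ne'
        field_simp
      rw [← heq]
      exact Finset.le_sup' (fun i => min (p i) (q i / l) / β / q i) (Finset.mem_univ i0)
  rw [hA, hB, ← Real.log_mul (by positivity) (by positivity)]
  congr 1
  field_simp
end

section
/- For α ∈ (0,1) ∪ (1,∞), λ ∈ [0,1], and strictly positive probability vectors p, q, the minimizer over probability vectors r of the linearly scalarized α-divergence objective λ·Σ_i r_i^α q_i^{1-α} + (1−λ)·Σ_i r_i^α p_i^{1-α} (for α > 1; maximizer for α ∈ (0,1)) is the vector r with r_i proportional to (λ q_i^{1-α} + (1−λ) p_i^{1-α})^{1/(1-α)}. -/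
open Real Finset

/-!
Writing `c i = λ q i ^ (1-α) + (1-λ) p i ^ (1-α) > 0`, the objective is `∑ i, c i * r i ^ α`.
The candidate `r` satisfies the Lagrange condition: `c i * r i ^ (α - 1)` does not depend on `i`.
Hence summing the tangent-line inequalities of `x ↦ x ^ α` at `r i` (convex for `α > 1`,
concave for `α < 1`) with weights `c i`, the first-order terms cancel on the simplex.
-/

lemma rpow_mul_one_add_mul_div_sub_one {x y a : ℝ} (hy : 0 < y) :
    y ^ a * (1 + a * (x / y - 1)) = y ^ a + a * y ^ (a - 1) * (x - y) := by
  rw [rpow_sub_one hy.ne']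
  field_simp

lemma rpow_add_mul_rpow_sub_one_mul_sub_le_rpow {x y a : ℝ} (hx : 0 ≤ x) (hy : 0 < y)
    (ha : 1 ≤ a) : y ^ a + a * y ^ (a - 1) * (x - y) ≤ x ^ a := by
  have h := one_add_mul_self_le_rpow_one_add (s := x / y - 1) (by linarith [div_nonneg hx hy.le]) ha
  rw [add_sub_cancel, div_rpow hx hy.le, le_div_iff₀ (rpow_pos_of_pos hy a)] at h
  rw [← rpow_mul_one_add_mul_div_sub_one hy]
  linarith

lemma rpow_le_rpow_add_mul_rpow_sub_one_mul_sub {x y a : ℝ} (hx : 0 ≤ x) (hy : 0 < y)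
    (ha₀ : 0 ≤ a) (ha₁ : a ≤ 1) : x ^ a ≤ y ^ a + a * y ^ (a - 1) * (x - y) := by
  have h := rpow_one_add_le_one_add_mul_self (s := x / y - 1) (by linarith [div_nonneg hx hy.le]) ha₀ ha₁
  rw [add_sub_cancel, div_rpow hx hy.le, div_le_iff₀ (rpow_pos_of_pos hy a)] at h
  rw [← rpow_mul_one_add_mul_div_sub_one hy]
  linarith

section WeightedPowerSum

variable {ι : Type*} [Fintype ι] {c r s : ι → ℝ} {a κ : ℝ}

lemma sum_mul_tangent_rpow_eq (hκ : ∀ i, c i * r i ^ (a - 1) = κ) (hs : ∑ i, s i = ∑ i, r i) :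
    ∑ i, c i * (r i ^ a + a * r i ^ (a - 1) * (s i - r i)) = ∑ i, c i * r i ^ a := by
  have h : ∀ i, c i * (r i ^ a + a * r i ^ (a - 1) * (s i - r i))
      = c i * r i ^ a + a * κ * (s i - r i) := fun i => by rw [← hκ i]; ring
  simp only [h, sum_add_distrib, ← mul_sum, sum_sub_distrib, hs, sub_self, mul_zero, add_zero]

lemma sum_mul_rpow_le_of_one_le (hc : ∀ i, 0 ≤ c i) (hr : ∀ i, 0 < r i)
    (hs₀ : ∀ i, 0 ≤ s i) (hκ : ∀ i, c i * r i ^ (a - 1) = κ) (hs : ∑ i, s i = ∑ i, r i)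
    (ha : 1 ≤ a) : ∑ i, c i * r i ^ a ≤ ∑ i, c i * s i ^ a :=
  calc ∑ i, c i * r i ^ a = ∑ i, c i * (r i ^ a + a * r i ^ (a - 1) * (s i - r i)) :=
        (sum_mul_tangent_rpow_eq hκ hs).symm
    _ ≤ ∑ i, c i * s i ^ a := sum_le_sum fun i _ => mul_le_mul_of_nonneg_left
        (rpow_add_mul_rpow_sub_one_mul_sub_le_rpow (hs₀ i) (hr i) ha) (hc i)

lemma sum_mul_rpow_le_of_le_one (hc : ∀ i, 0 ≤ c i) (hr : ∀ i, 0 < r i)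
    (hs₀ : ∀ i, 0 ≤ s i) (hκ : ∀ i, c i * r i ^ (a - 1) = κ) (hs : ∑ i, s i = ∑ i, r i)
    (ha₀ : 0 ≤ a) (ha₁ : a ≤ 1) : ∑ i, c i * s i ^ a ≤ ∑ i, c i * r i ^ a :=
  calc ∑ i, c i * s i ^ a ≤ ∑ i, c i * (r i ^ a + a * r i ^ (a - 1) * (s i - r i)) :=
        sum_le_sum fun i _ => mul_le_mul_of_nonneg_left
          (rpow_le_rpow_add_mul_rpow_sub_one_mul_sub (hs₀ i) (hr i) ha₀ ha₁) (hc i)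
    _ = ∑ i, c i * r i ^ a := sum_mul_tangent_rpow_eq hκ hs

lemma div_sum_mem_stdSimplex {w : ι → ℝ} (hw : ∀ i, 0 ≤ w i) (hW : ∑ j, w j ≠ 0) :
    (fun i => w i / ∑ j, w j) ∈ stdSimplex ℝ ι :=
  ⟨fun i => div_nonneg (hw i) (sum_nonneg fun j _ => hw j), by rw [← sum_div, div_self hW]⟩

end WeightedPowerSum

lemma mul_rpow_one_div_one_sub_div_rpow_sub_one {c W α : ℝ} (hc : 0 < c) (hW : 0 < W)
    (hα : α ≠ 1) : c * (c ^ (1 / (1 - α)) / W) ^ (α - 1) = W ^ (1 - α) := by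
  have hα' : 1 - α ≠ 0 := sub_ne_zero.2 hα.symm
  rw [div_rpow (rpow_nonneg hc.le _) hW.le, ← rpow_mul hc.le,
    show 1 / (1 - α) * (α - 1) = -1 by field_simp; ring, rpow_neg_one,
    show 1 - α = -(α - 1) by ring, rpow_neg hW.le]
  field_simp

theorem scalarized_alpha_barycenter_general (n : ℕ) (p q : Fin n → ℝ)
    (hp0 : ∀ i, 0 < p i) (hp1 : ∑ i, p i = 1)
    (hq0 : ∀ i, 0 < q i)
    (α : ℝ) (hα : 0 < α)
    (l : ℝ) (hl0 : 0 ≤ l) (hl1 : l ≤ 1) :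
    letI f : (Fin n → ℝ) → ℝ := fun r =>
      l * ∑ i, r i ^ α * q i ^ (1 - α) + (1 - l) * ∑ i, r i ^ α * p i ^ (1 - α)
    letI w : Fin n → ℝ := fun i =>
      (l * q i ^ (1 - α) + (1 - l) * p i ^ (1 - α)) ^ ((1 : ℝ) / (1 - α))
    letI r : Fin n → ℝ := fun i => w i / ∑ j, w j
    r ∈ stdSimplex ℝ (Fin n) ∧
      (1 < α → ∀ s ∈ stdSimplex ℝ (Fin n), f r ≤ f s) ∧
      (α < 1 → ∀ s ∈ stdSimplex ℝ (Fin n), f s ≤ f r) := by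
  let c : Fin n → ℝ := fun i => l * q i ^ (1 - α) + (1 - l) * p i ^ (1 - α)
  let w : Fin n → ℝ := fun i => c i ^ ((1 : ℝ) / (1 - α))
  let r : Fin n → ℝ := fun i => w i / ∑ j, w j
  let f : (Fin n → ℝ) → ℝ := fun s =>
    l * ∑ i, s i ^ α * q i ^ (1 - α) + (1 - l) * ∑ i, s i ^ α * p i ^ (1 - α)
  show r ∈ stdSimplex ℝ (Fin n) ∧ (1 < α → ∀ s ∈ stdSimplex ℝ (Fin n), f r ≤ f s) ∧
    (α < 1 → ∀ s ∈ stdSimplex ℝ (Fin n), f s ≤ f r)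
  have hc : ∀ i, 0 < c i := fun i => convex_Ioi (0 : ℝ) (rpow_pos_of_pos (hq0 i) _)
    (rpow_pos_of_pos (hp0 i) _) hl0 (sub_nonneg.2 hl1) (add_sub_cancel l 1)
  have hf : ∀ s, f s = ∑ i, c i * s i ^ α := fun s => by
    simp only [f, c, mul_sum, ← sum_add_distrib]
    exact sum_congr rfl fun i _ => by ring
  have hw : ∀ i, 0 < w i := fun i => rpow_pos_of_pos (hc i) _
  have hW : 0 < ∑ j, w j :=
    sum_pos (fun i _ => hw i) (nonempty_of_sum_ne_zero (hp1 ▸ one_ne_zero : ∑ i, p i ≠ 0))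
  have hr : r ∈ stdSimplex ℝ (Fin n) := div_sum_mem_stdSimplex (fun i => (hw i).le) hW.ne'
  have hr₀ : ∀ i, 0 < r i := fun i => div_pos (hw i) hW
  have hκ : α ≠ 1 → ∀ i, c i * r i ^ (α - 1) = (∑ j, w j) ^ (1 - α) := fun hα1 i =>
    mul_rpow_one_div_one_sub_div_rpow_sub_one (hc i) hW hα1
  have hsum : ∀ s ∈ stdSimplex ℝ (Fin n), ∑ i, s i = ∑ i, r i := fun s hs => hs.2.trans hr.2.symm
  refine ⟨hr, fun hα' s hs => ?_, fun hα' s hs => ?_⟩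
  · rw [hf, hf]
    exact sum_mul_rpow_le_of_one_le (fun i => (hc i).le) hr₀ hs.1
      (hκ hα'.ne') (hsum s hs) hα'.le
  · rw [hf, hf]
    exact sum_mul_rpow_le_of_le_one (fun i => (hc i).le) hr₀ hs.1
      (hκ hα'.ne) (hsum s hs) hα.le hα'.le

/-- For `α ∈ (0,1) ∪ (1,∞)`, `λ ∈ [0,1]`, and strictly positive probability
vectors `p`, `q`, the optimizer over the probability simplex of
`r ↦ λ ∑ i, r i ^ α * q i ^ (1-α) + (1-λ) ∑ i, r i ^ α * p i ^ (1-α)`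
(minimizer for `α > 1`, maximizer for `α ∈ (0,1)`) is the vector with
`r i ∝ (λ * q i ^ (1-α) + (1-λ) * p i ^ (1-α)) ^ (1/(1-α))`. -/
theorem scalarized_alpha_barycenter (n : ℕ) (p q : Fin n → ℝ)
    (hp0 : ∀ i, 0 < p i) (hp1 : ∑ i, p i = 1)
    (hq0 : ∀ i, 0 < q i) (hq1 : ∑ i, q i = 1)
    (α : ℝ) (hα : 0 < α) (hα1 : α ≠ 1)
    (l : ℝ) (hl0 : 0 ≤ l) (hl1 : l ≤ 1) :
    letI f : (Fin n → ℝ) → ℝ := fun r =>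
      l * ∑ i, r i ^ α * q i ^ (1 - α) + (1 - l) * ∑ i, r i ^ α * p i ^ (1 - α)
    letI w : Fin n → ℝ := fun i =>
      (l * q i ^ (1 - α) + (1 - l) * p i ^ (1 - α)) ^ ((1 : ℝ) / (1 - α))
    letI r : Fin n → ℝ := fun i => w i / ∑ j, w j
    r ∈ stdSimplex ℝ (Fin n) ∧
      (1 < α → ∀ s ∈ stdSimplex ℝ (Fin n), f r ≤ f s) ∧
      (α < 1 → ∀ s ∈ stdSimplex ℝ (Fin n), f s ≤ f r) :=
  scalarized_alpha_barycenter_general n p q hp0 hp1 hq0 α hα l hl0 hl1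
end

section
/- For a twice differentiable strictly convex A : ℝ^d → ℝ, fixed θ_P, θ_Q, and λ ∈ [0,1], the point θ* = λθ_P + (1−λ)θ_Q is a global minimizer of the function θ ↦ λ B_A(θ_P, θ) + (1−λ) B_A(θ_Q, θ). -/
open Real

/-- First-order condition: a convex differentiable function lies above its tangent. -/
lemma gradient_ineq {E : Type*} [NormedAddCommGroup E] [InnerProductSpace ℝ E] [CompleteSpace E]
    {A : E → ℝ} (hconv : ConvexOn ℝ Set.univ A) {x : E} {g : E}
    (hg : HasGradientAt A g x) (y : E) :
    A x + inner ℝ g (y - x) ≤ A y := by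
  set v := y - x with hv
  set f : ℝ → ℝ := fun t => A (x + t • v) with hf
  have hfconv : ConvexOn ℝ Set.univ f := by
    refine ⟨convex_univ, ?_⟩
    intro t _ s _ a b ha hb hab
    have h2 := hconv.2 (Set.mem_univ (x + t • v)) (Set.mem_univ (x + s • v)) ha hb hab
    have key : x + (a * t + b * s) • v = a • (x + t • v) + b • (x + s • v) := by
      have : a = 1 - b := by linarith
      subst this
      module
    simpa [hf, key] using h2
  have hL : HasDerivAt (fun t : ℝ => x + t • v) v 0 := by
    simpa using ((hasDerivAt_id (0 : ℝ)).smul_const v).const_add x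
  have hf' : HasDerivAt f (inner ℝ g v : ℝ) 0 := by
    have hx0 : x + (0:ℝ) • v = x := by simp
    have := (hx0 ▸ hg.hasFDerivAt : HasFDerivAt A _ (x + (0:ℝ) • v)).comp_hasDerivAt 0 hL
    exact this
  have hs := hfconv.le_slope_of_hasDerivAt (Set.mem_univ 0) (Set.mem_univ 1) one_pos hf'
  have h0 : f 0 = A x := by simp [hf]
  have h1 : f 1 = A y := by simp [hf, hv]
  rw [slope_def_field] at hs
  simp [h0, h1] at hs
  linarith

/-- For `A : ℝ^d → ℝ` strictly convex and twice differentiable with gradient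
`A'`, and `B_A(x,y) = A x - A y - ⟪A' y, x - y⟫`, the point `θ* = λ θ_P + (1-λ) θ_Q` is a
global minimizer of `θ ↦ λ B_A(θ_P, θ) + (1-λ) B_A(θ_Q, θ)`. -/
theorem bregman_scalarized_min_right (d : ℕ)
    (A : EuclideanSpace ℝ (Fin d) → ℝ) (A' : EuclideanSpace ℝ (Fin d) → EuclideanSpace ℝ (Fin d))
    (hconv : StrictConvexOn ℝ Set.univ A)
    (hsmooth : ContDiff ℝ 2 A)
    (hgrad : ∀ x, HasGradientAt A (A' x) x)
    (θP θQ : EuclideanSpace ℝ (Fin d)) (l : ℝ) (hl0 : 0 ≤ l) (hl1 : l ≤ 1) :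
    ∀ θ : EuclideanSpace ℝ (Fin d),
      l * (A θP - A (l • θP + (1 - l) • θQ) -
          inner ℝ (A' (l • θP + (1 - l) • θQ)) (θP - (l • θP + (1 - l) • θQ))) +
        (1 - l) * (A θQ - A (l • θP + (1 - l) • θQ) -
          inner ℝ (A' (l • θP + (1 - l) • θQ)) (θQ - (l • θP + (1 - l) • θQ))) ≤
      l * (A θP - A θ - inner ℝ (A' θ) (θP - θ)) +
        (1 - l) * (A θQ - A θ - inner ℝ (A' θ) (θQ - θ)) := by
  intro θ
  set θs : EuclideanSpace ℝ (Fin d) := l • θP + (1 - l) • θQ with hθs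
  have hzero : l • (θP - θs) + (1 - l) • (θQ - θs) = 0 := by
    rw [hθs]; module
  have hcomb : l • (θP - θ) + (1 - l) • (θQ - θ) = θs - θ := by
    rw [hθs]; module
  have e1 : l * (inner ℝ (A' θs) (θP - θs) : ℝ) + (1 - l) * inner ℝ (A' θs) (θQ - θs) = 0 := by
    rw [← real_inner_smul_right, ← real_inner_smul_right, ← inner_add_right, hzero,
      inner_zero_right]
  have e2 : l * (inner ℝ (A' θ) (θP - θ) : ℝ) + (1 - l) * inner ℝ (A' θ) (θQ - θ)
      = inner ℝ (A' θ) (θs - θ) := by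
    rw [← real_inner_smul_right, ← real_inner_smul_right, ← inner_add_right, hcomb]
  have key : A θ + inner ℝ (A' θ) (θs - θ) ≤ A θs :=
    gradient_ineq hconv.convexOn (hgrad θ) θs
  nlinarith [key, e1, e2]
end

section
/- Conversely, for convex f₁, f₂ on a convex set C ⊆ ℝ^n, every Pareto-optimal point x of (f₁, f₂) minimizes λf₁ + (1−λ)f₂ over C for some λ ∈ [0,1]. -/
/-!
The points of `ℝ^ι` lying above some value `F y`, `y ∈ C`, form a convex set which misses the open
orthant strictly below `F x`. A Hahn–Banach functional separating the two is nonnegative on the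
nonnegative orthant and positive at `1`; normalized, its coefficients are a point `w` of the
standard simplex. Since `F x` lies in the convex set and in the closure of the orthant, the
separating level is attained there, so `x` minimizes `∑ i, w i * F y i` over `C`.
-/

open Set

variable {ι : Type*}

theorem convex_setOf_exists_le {E : Type*} [AddCommGroup E] [Module ℝ E] {C : Set E}
    (hC : Convex ℝ C) {F : E → ι → ℝ} (hF : ∀ i, ConvexOn ℝ C fun y ↦ F y i) :
    Convex ℝ {p | ∃ y ∈ C, F y ≤ p} := by
  rintro p ⟨y, hy, hyp⟩ p' ⟨y', hy', hyp'⟩ a b ha hb hab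
  refine ⟨a • y + b • y', hC hy hy' ha hb hab, fun i ↦ ?_⟩
  calc F (a • y + b • y') i ≤ a • F y i + b • F y' i := (hF i).2 hy hy' ha hb hab
    _ ≤ (a • p + b • p') i := by
      simp only [Pi.add_apply, Pi.smul_apply, smul_eq_mul]
      gcongr
      exacts [hyp i, hyp' i]

variable [Fintype ι]

theorem Convex.exists_nonneg_dual_isMinOn_of_weakly_minimal {S : Set (ι → ℝ)}
    (hS : Convex ℝ S) {q : ι → ℝ} (hq : q ∈ S) (hmin : ∀ p ∈ S, ¬ ∀ i, p i < q i) :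
    ∃ g : StrongDual ℝ (ι → ℝ), (∀ v, 0 ≤ v → 0 ≤ g v) ∧ 0 < g 1 ∧ IsMinOn g S q := by
  set O : Set (ι → ℝ) := univ.pi fun i ↦ Iio (q i)
  have hdisj : Disjoint O S := disjoint_left.2 fun p hpO hpS ↦ hmin p hpS (by simpa [O] using hpO)
  obtain ⟨g, u, hgO, hgS⟩ := geometric_hahn_banach_open (convex_pi fun i _ ↦ convex_Iio (q i))
    (isOpen_set_pi finite_univ fun i _ ↦ isOpen_Iio) hS hdisj
  have hclosure : closure O = univ.pi fun i ↦ Iic (q i) := by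
    simp only [O, closure_pi_set, closure_Iio]
  have hle : univ.pi (fun i ↦ Iic (q i)) ⊆ {p | g p ≤ u} := hclosure ▸
    closure_minimal (fun p hp ↦ (hgO p hp).le) (isClosed_le g.continuous continuous_const)
  have hgq : g q = u := le_antisymm (hle fun i _ ↦ mem_Iic.2 (le_refl (q i))) (hgS q hq)
  refine ⟨g, fun v hv ↦ ?_, ?_, fun p hp ↦ hgq ▸ hgS p hp⟩
  · have : g (q - v) ≤ u := hle fun i _ ↦ by simpa using hv i
    rw [map_sub] at this
    linarith
  · have := hgO (q - 1) fun i _ ↦ by simp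
    rw [map_sub] at this
    linarith

theorem LinearMap.exists_mem_stdSimplex_sum_mul_eq_div (g : (ι → ℝ) →ₗ[ℝ] ℝ)
    (hg : ∀ v, 0 ≤ v → 0 ≤ g v) (hg1 : 0 < g 1) :
    ∃ w ∈ stdSimplex ℝ ι, ∀ v, ∑ i, w i * v i = g v / g 1 := by
  classical
  set e : ι → ι → ℝ := fun i j ↦ if i = j then 1 else 0
  have hsum : ∀ v, ∑ i, v i * g (e i) = g v := fun v ↦ by
    simp [LinearMap.pi_apply_eq_sum_univ g v, e]
  refine ⟨fun i ↦ g (e i) / g 1, ⟨fun i ↦ div_nonneg (hg _ fun j ↦ ?_) hg1.le, ?_⟩, fun v ↦ ?_⟩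
  · by_cases h : i = j <;> simp [e, h]
  · rw [← Finset.sum_div, div_eq_one_iff_eq hg1.ne', ← hsum 1]
    simp
  · rw [← hsum v, Finset.sum_div]
    exact Finset.sum_congr rfl fun i _ ↦ by ring

theorem exists_mem_stdSimplex_isMinOn_sum_mul {E : Type*} [AddCommGroup E] [Module ℝ E]
    {C : Set E} (hC : Convex ℝ C) {F : E → ι → ℝ} (hF : ∀ i, ConvexOn ℝ C fun y ↦ F y i)
    {x : E} (hx : x ∈ C) (hx_min : ¬ ∃ y ∈ C, ∀ i, F y i < F x i) :
    ∃ w ∈ stdSimplex ℝ ι, IsMinOn (fun y ↦ ∑ i, w i * F y i) C x := by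
  obtain ⟨g, hg_nonneg, hg1, hg_min⟩ :=
    (convex_setOf_exists_le hC hF).exists_nonneg_dual_isMinOn_of_weakly_minimal ⟨x, hx, le_rfl⟩
      fun p ⟨y, hy, hyp⟩ hlt ↦ hx_min ⟨y, hy, fun i ↦ (hyp i).trans_lt (hlt i)⟩
  obtain ⟨w, hw, hwg⟩ := g.toLinearMap.exists_mem_stdSimplex_sum_mul_eq_div hg_nonneg hg1
  refine ⟨w, hw, fun y hy ↦ ?_⟩
  simp only [hwg]
  exact div_le_div_of_nonneg_right (hg_min ⟨y, hy, le_rfl⟩) hg1.le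

/-- For convex `f₁, f₂` on a convex set `C ⊆ ℝ^n`, every Pareto-optimal
point `x` of `(f₁, f₂)` minimizes some scalarization `λ f₁ + (1-λ) f₂`, `λ ∈ [0,1]`,
over `C`. -/
theorem pareto_scalarization (n : ℕ) (C : Set (Fin n → ℝ)) (hC : Convex ℝ C)
    (f₁ f₂ : (Fin n → ℝ) → ℝ)
    (hf₁ : ConvexOn ℝ C f₁) (hf₂ : ConvexOn ℝ C f₂)
    (x : Fin n → ℝ) (hx : x ∈ C)
    (hpareto : ¬ ∃ y ∈ C, f₁ y ≤ f₁ x ∧ f₂ y ≤ f₂ x ∧ (f₁ y < f₁ x ∨ f₂ y < f₂ x)) :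
    ∃ l : ℝ, 0 ≤ l ∧ l ≤ 1 ∧
      ∀ y ∈ C, l * f₁ x + (1 - l) * f₂ x ≤ l * f₁ y + (1 - l) * f₂ y := by
  obtain ⟨w, ⟨hw_nonneg, hw_sum⟩, hw_min⟩ := exists_mem_stdSimplex_isMinOn_sum_mul hC
    (F := fun y ↦ ![f₁ y, f₂ y]) (Fin.forall_fin_two.2 ⟨hf₁, hf₂⟩) hx
    fun ⟨y, hy, hlt⟩ ↦ hpareto ⟨y, hy, (hlt 0).le, (hlt 1).le, .inl (hlt 0)⟩
  rw [Fin.sum_univ_two] at hw_sum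
  refine ⟨w 0, hw_nonneg 0, by linarith [hw_nonneg 1], fun y hy ↦ ?_⟩
  rw [show 1 - w 0 = w 1 by linarith]
  simpa [Fin.sum_univ_two] using isMinOn_iff.1 hw_min y hy
end

section
/- For strictly positive probability vectors p, q and the maximal-precision-recall set of Sajjadi et al.: a pair (π, ρ) ∈ (0,1]² is achievable (i.e., there exist probability vectors r, p', q' with p = ρr + (1−ρ)p' and q = πr + (1−π)q') if and only if there exists a probability vector r with ρ ≤ exp(−D_∞(r‖p)) and π ≤ exp(−D_∞(r‖q)), where D_∞(r‖p) = log max_i r_i/p_i. -/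
open Real

/-
Both sides reduce to the same pointwise condition on `r`. A probability vector `p` splits as
`c r + (1 - c) p'` with `p'` a probability vector exactly when `c r ≤ p` entrywise: the remainder
`p - c r` then has mass `1 - c`, and `p' := (p - c r) / (1 - c)` (or `p' := p` when `c = 1`, where
`r = p` is forced). On the other side, `exp (-D_∞(r‖p))` is the reciprocal of `max_i r_i / p_i`,
so `c ≤ exp (-D_∞(r‖p))` says `c r_i ≤ p_i` for every `i`.
-/

section

variable {ι : Type*} [Fintype ι]

lemma exists_mixture_eq_iff {p r : ι → ℝ} (hp : p ∈ stdSimplex ℝ ι) (hr : r ∈ stdSimplex ℝ ι)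
    {c : ℝ} (hc : c ≤ 1) :
    (∃ p' ∈ stdSimplex ℝ ι, ∀ i, p i = c * r i + (1 - c) * p' i) ↔ ∀ i, c * r i ≤ p i := by
  constructor
  · rintro ⟨p', hp', hmix⟩ i
    have : 0 ≤ (1 - c) * p' i := mul_nonneg (by linarith) (hp'.1 i)
    linarith [hmix i]
  · intro hle
    rcases hc.lt_or_eq with hlt | rfl
    · have hc' : (1 : ℝ) - c ≠ 0 := by linarith
      refine ⟨fun i => (p i - c * r i) / (1 - c),
        ⟨fun i => div_nonneg (by linarith [hle i]) (by linarith), ?_⟩,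
        fun i => by field_simp; ring⟩
      rw [← Finset.sum_div, Finset.sum_sub_distrib, ← Finset.mul_sum, hp.2, hr.2, mul_one,
        div_self hc']
    · have hrp : ∀ i, r i = p i := by
        simpa using (Finset.sum_eq_sum_iff_of_le fun i _ => by simpa using hle i).mp
          (hr.2.trans hp.2.symm)
      exact ⟨p, hp, fun i => by rw [hrp i]; ring⟩

lemma le_exp_neg_log_sup'_div_iff (hne : (Finset.univ : Finset ι).Nonempty) {p r : ι → ℝ}
    (hp : ∀ i, 0 < p i) (hr : r ∈ stdSimplex ℝ ι) {c : ℝ} (hc : 0 < c) :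
    c ≤ exp (-log (Finset.univ.sup' hne fun i => r i / p i)) ↔ ∀ i, c * r i ≤ p i := by
  obtain ⟨j, -, hj⟩ : ∃ j ∈ Finset.univ, (0 : ι → ℝ) j < r j :=
    Finset.exists_lt_of_sum_lt (by simp [hr.2])
  have hsup : 0 < Finset.univ.sup' hne fun i => r i / p i :=
    (Finset.lt_sup'_iff hne).mpr ⟨j, Finset.mem_univ j, div_pos hj (hp j)⟩
  rw [exp_neg, exp_log hsup, le_inv_comm₀ hc hsup, Finset.sup'_le_iff]
  simp only [Finset.mem_univ, true_implies, div_le_iff₀ (hp _), le_inv_mul_iff₀ hc]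

end

/-- For strictly positive probability vectors `p`, `q`, a pair
`(π, ρ) ∈ (0,1]²` is achievable in the sense of Sajjadi et al. (there exist probability
vectors `r`, `p'`, `q'` with `p = ρ r + (1-ρ) p'` and `q = π r + (1-π) q'`) iff there is
a probability vector `r` with `ρ ≤ exp (-D_∞(r‖p))` and `π ≤ exp (-D_∞(r‖q))`. -/
theorem prd_achievable_iff (n : ℕ) (hn : 0 < n) (p q : Fin n → ℝ)
    (hp0 : ∀ i, 0 < p i) (hp1 : ∑ i, p i = 1)
    (hq0 : ∀ i, 0 < q i) (hq1 : ∑ i, q i = 1)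
    (prec rec : ℝ) (hprec0 : 0 < prec) (hprec1 : prec ≤ 1) (hrec0 : 0 < rec) (hrec1 : rec ≤ 1) :
    letI hne : (Finset.univ : Finset (Fin n)).Nonempty :=
      Finset.univ_nonempty_iff.mpr ⟨⟨0, hn⟩⟩
    ((∃ r p' q' : Fin n → ℝ,
        r ∈ stdSimplex ℝ (Fin n) ∧ p' ∈ stdSimplex ℝ (Fin n) ∧ q' ∈ stdSimplex ℝ (Fin n) ∧
        (∀ i, p i = rec * r i + (1 - rec) * p' i) ∧
        (∀ i, q i = prec * r i + (1 - prec) * q' i)) ↔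
      (∃ r : Fin n → ℝ, r ∈ stdSimplex ℝ (Fin n) ∧
        rec ≤ Real.exp (-(Real.log (Finset.univ.sup' hne fun i => r i / p i))) ∧
        prec ≤ Real.exp (-(Real.log (Finset.univ.sup' hne fun i => r i / q i))))) := by
  have hp : p ∈ stdSimplex ℝ (Fin n) := ⟨fun i => (hp0 i).le, hp1⟩
  have hq : q ∈ stdSimplex ℝ (Fin n) := ⟨fun i => (hq0 i).le, hq1⟩
  refine exists_congr fun r => ⟨?_, ?_⟩
  · rintro ⟨p', q', hr, hp', hq', hpmix, hqmix⟩
    exact ⟨hr,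
      (le_exp_neg_log_sup'_div_iff _ hp0 hr hrec0).mpr
        ((exists_mixture_eq_iff hp hr hrec1).mp ⟨p', hp', hpmix⟩),
      (le_exp_neg_log_sup'_div_iff _ hq0 hr hprec0).mpr
        ((exists_mixture_eq_iff hq hr hprec1).mp ⟨q', hq', hqmix⟩)⟩
  · rintro ⟨hr, hrec, hprec⟩
    obtain ⟨p', hp', hpmix⟩ := (exists_mixture_eq_iff hp hr hrec1).mpr
      ((le_exp_neg_log_sup'_div_iff _ hp0 hr hrec0).mp hrec)
    obtain ⟨q', hq', hqmix⟩ := (exists_mixture_eq_iff hq hr hprec1).mpr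
      ((le_exp_neg_log_sup'_div_iff _ hq0 hr hprec0).mp hprec)
    exact ⟨p', q', hr, hp', hq', hpmix, hqmix⟩
end
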